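/- For every 0 ≤ k ≤ p+2, each g ∈ G(𝔄_k) maps the hyperplane W := Span{Y, Ỹ, Z₁,…,Z_p, Z̃₁,…,Z̃_p} = {ξ ∈ V : a(ξ) = 0} onto itself. -/
import Mathlib


/-- Index type for the basis {X, Y, Z_1,...,Z_p, Ỹ, Z̃_1,...,Z̃_p} of V = ℝ^{3+2p}. -/
inductive Idx (p : ℕ) : Type where
  | X : Idx p
  | Y : Idx p
  | Z : Fin p → Idx p
  | Yt : Idx p
  | Zt : Fin p → Idx p
  deriving DecidableEq, Fintype

/-- V := ℝ^{3+2p}, realized as functions on the index set. -/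
abbrev V (p : ℕ) : Type := Idx p → ℝ

/-- The basis vectors of `V p`. -/
noncomputable def e (p : ℕ) (a : Idx p) : V p := fun b => if b = a then 1 else 0

/-- `T p k` is the totally symmetric multilinear form (with the first two of its `k+2`
arguments singled out) so that `B^k(u,v,w,x;η) = u_X x_X T(v,w,η) - ...`.
For `1 ≤ k ≤ p` its nonzero components are: one argument is `Z_k`, the others `Y`;
for `k = 0` the nonzero components are `T(Y,Ỹ) = T(Z_i,Z̃_i) = 1`;
for `k > p` (used for `k = p+1, p+2`) the only nonzero component has all arguments `Y`. -/
noncomputable def T (p k : ℕ) (a b : V p) (η : Fin k → V p) : ℝ :=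
  if hk : 1 ≤ k ∧ k ≤ p then
    (a (Idx.Z ⟨k - 1, by omega⟩) * b Idx.Y + a Idx.Y * b (Idx.Z ⟨k - 1, by omega⟩)) *
        ∏ j, η j Idx.Y +
      a Idx.Y * b Idx.Y *
        ∑ j, η j (Idx.Z ⟨k - 1, by omega⟩) * ∏ l ∈ Finset.univ.erase j, η l Idx.Y
  else if k = 0 then
    a Idx.Y * b Idx.Yt + b Idx.Y * a Idx.Yt +
      ∑ i : Fin p, (a (Idx.Z i) * b (Idx.Zt i) + b (Idx.Z i) * a (Idx.Zt i))
  else a Idx.Y * b Idx.Y * ∏ j, η j Idx.Y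

/-- The tensor `B^k ∈ ⊗^{4+k} V*`: it has the curvature symmetries in the first four
arguments, is totally symmetric in the last `k`, and its nonzero components on basis
vectors, up to these symmetries, are exactly those prescribed in the paper:
`B⁰(X,Y,Ỹ,X) = B⁰(X,Z_i,Z̃_i,X) = 1`;
`B^k(X,Y,Z_k,X;Y,…,Y) = B^k(X,Y,Y,X;Z_k,Y,…,Y) = … = B^k(X,Y,Y,X;Y,…,Y,Z_k) = 1` for `1 ≤ k ≤ p`;
`B^{p+1}(X,Y,Y,X;Y,…,Y) = 1` and `B^{p+2}(X,Y,Y,X;Y,…,Y) = 1`. -/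
noncomputable def Bc (p k : ℕ) (u v w x : V p) (η : Fin k → V p) : ℝ :=
  u Idx.X * x Idx.X * T p k v w η - u Idx.X * w Idx.X * T p k v x η -
    v Idx.X * x Idx.X * T p k u w η + v Idx.X * w Idx.X * T p k u x η

/-- `GA p k g` means `g ∈ G(𝔄_k)`, i.e. the invertible linear map `g` of `V` satisfies
`g* B^i = B^i` for all `0 ≤ i ≤ k`. -/
def GA (p k : ℕ) (g : V p ≃ₗ[ℝ] V p) : Prop :=
  ∀ i, i ≤ k → ∀ u v w x : V p, ∀ η : Fin i → V p,
    Bc p i (g u) (g v) (g w) (g x) (fun j => g (η j)) = Bc p i u v w x η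

/-- W := Span{Y, Ỹ, Z_1,…,Z_p, Z̃_1,…,Z̃_p} ⊆ V. -/
def Wspan (p : ℕ) : Submodule ℝ (V p) :=
  Submodule.span ℝ {v : V p | v = e p Idx.Y ∨ v = e p Idx.Yt ∨
    (∃ i, v = e p (Idx.Z i)) ∨ ∃ i, v = e p (Idx.Zt i)}

lemma T0_def (p : ℕ) (a b : V p) (η : Fin 0 → V p) :
    T p 0 a b η = a Idx.Y * b Idx.Yt + b Idx.Y * a Idx.Yt +
      ∑ i : Fin p, (a (Idx.Z i) * b (Idx.Zt i) + b (Idx.Z i) * a (Idx.Zt i)) := by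
  simp [T]

lemma Bc0_eta (p : ℕ) (u v w x : V p) (η η' : Fin 0 → V p) :
    Bc p 0 u v w x η = Bc p 0 u v w x η' := by
  have : η = η' := funext fun j => j.elim0
  rw [this]

lemma Qchar (p : ℕ) (ξ : V p) :
    (∀ v w v' w' : V p, Bc p 0 ξ v w ξ Fin.elim0 * Bc p 0 ξ v' w' ξ Fin.elim0 =
      Bc p 0 ξ v w' ξ Fin.elim0 * Bc p 0 ξ v' w ξ Fin.elim0) ↔ ξ Idx.X = 0 := by
  constructor
  · intro h
    by_contra ht
    have := h (e p Idx.Y) (e p Idx.Yt) (e p Idx.Yt) (e p Idx.Y)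
    simp [Bc, T0_def, e] at this
    exact ht this
  · intro h0 v w v' w'
    have key : ∀ a b : V p, Bc p 0 ξ a b ξ Fin.elim0 =
        a Idx.X * b Idx.X * T p 0 ξ ξ Fin.elim0 := by
      intro a b; simp [Bc, h0]
    rw [key, key, key, key]; ring

lemma gX_zero_iff (p k : ℕ) (g : V p ≃ₗ[ℝ] V p) (hg : GA p k g) (ξ : V p) :
    (g ξ) Idx.X = 0 ↔ ξ Idx.X = 0 := by
  rw [← Qchar, ← Qchar]
  have hinv : ∀ u v w x : V p, Bc p 0 (g u) (g v) (g w) (g x) Fin.elim0 =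
      Bc p 0 u v w x Fin.elim0 := by
    intro u v w x
    have := hg 0 (Nat.zero_le k) u v w x Fin.elim0
    rw [← this]
    exact Bc0_eta _ _ _ _ _ _ _
  constructor
  · intro h v w v' w'
    have := h (g v) (g w) (g v') (g w')
    simpa [hinv] using this
  · intro h v w v' w'
    have := h (g.symm v) (g.symm w) (g.symm v') (g.symm w')
    have e1 : ∀ a : V p, g (g.symm a) = a := fun a => g.apply_symm_apply a
    calc Bc p 0 (g ξ) v w (g ξ) Fin.elim0 * Bc p 0 (g ξ) v' w' (g ξ) Fin.elim0
        = Bc p 0 ξ (g.symm v) (g.symm w) ξ Fin.elim0 *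
          Bc p 0 ξ (g.symm v') (g.symm w') ξ Fin.elim0 := by
          rw [← hinv ξ (g.symm v) (g.symm w) ξ, ← hinv ξ (g.symm v') (g.symm w') ξ, e1, e1, e1, e1]
      _ = Bc p 0 ξ (g.symm v) (g.symm w') ξ Fin.elim0 *
          Bc p 0 ξ (g.symm v') (g.symm w) ξ Fin.elim0 := this
      _ = Bc p 0 (g ξ) v w' (g ξ) Fin.elim0 * Bc p 0 (g ξ) v' w (g ξ) Fin.elim0 := by
          rw [← hinv ξ (g.symm v) (g.symm w') ξ, ← hinv ξ (g.symm v') (g.symm w) ξ, e1, e1, e1, e1]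

lemma Wspan_eq (p : ℕ) : (Wspan p : Set (V p)) = {ξ : V p | ξ Idx.X = 0} := by
  have hset : {ξ : V p | ξ Idx.X = 0} =
      (LinearMap.ker ((LinearMap.proj Idx.X : (Idx p → ℝ) →ₗ[ℝ] ℝ)) : Set (V p)) := rfl
  apply le_antisymm
  · rw [hset]
    refine Submodule.span_le.2 ?_
    rintro v (rfl | rfl | ⟨i, rfl⟩ | ⟨i, rfl⟩) <;> simp [e, LinearMap.mem_ker]
  · intro ξ hξ
    have hx : ξ Idx.X = 0 := hξ
    have hrep : ξ = ∑ a : Idx p, ξ a • e p a := by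
      funext b
      simp [e, Finset.sum_apply, Finset.sum_ite_eq]
    rw [hrep]
    refine Submodule.sum_mem _ ?_
    intro a _
    cases a with
    | X => rw [hx, zero_smul]; exact (Wspan p).zero_mem
    | Y => exact Submodule.smul_mem _ _ (Submodule.subset_span (Or.inl rfl))
    | Yt => exact Submodule.smul_mem _ _ (Submodule.subset_span (Or.inr (Or.inl rfl)))
    | Z i => exact Submodule.smul_mem _ _ (Submodule.subset_span (Or.inr (Or.inr (Or.inl ⟨i, rfl⟩))))
    | Zt i => exact Submodule.smul_mem _ _ (Submodule.subset_span (Or.inr (Or.inr (Or.inr ⟨i, rfl⟩))))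


/-- `W = Span{Y,Ỹ,Z_i,Z̃_i}` equals the hyperplane `{ξ : a(ξ) = 0}`, and
for every `0 ≤ k ≤ p+2`, each `g ∈ G(𝔄_k)` maps `W` onto itself. -/
theorem statement6 (p : ℕ) (hp : 1 ≤ p) (k : ℕ) (hk : k ≤ p + 2)
    (g : V p ≃ₗ[ℝ] V p) (hg : GA p k g) :
    (Wspan p : Set (V p)) = {ξ : V p | ξ Idx.X = 0} ∧
    Submodule.map g.toLinearMap (Wspan p) = Wspan p := by
  have hW := Wspan_eq p
  refine ⟨hW, ?_⟩
  have hmem : ∀ ξ : V p, ξ ∈ Wspan p ↔ ξ Idx.X = 0 := by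
    intro ξ
    constructor
    · intro h; exact (Set.ext_iff.1 hW ξ).1 h
    · intro h; exact (Set.ext_iff.1 hW ξ).2 h
  ext ξ
  rw [Submodule.mem_map, hmem]
  constructor
  · rintro ⟨η, hη, rfl⟩
    rw [hmem] at hη
    exact (gX_zero_iff p k g hg η).2 hη
  · intro h
    refine ⟨g.symm ξ, ?_, g.apply_symm_apply ξ⟩
    rw [hmem]
    have := (gX_zero_iff p k g hg (g.symm ξ))
    rw [g.apply_symm_apply] at this
    exact this.1 h
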